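/- Let a, b be rational integers with 2 ≤ a ≤ b−2 and let t, v₂, v₃ be integers with 1 ≤ t ≤ b−a, v₂ < 0 and v₃ < 0. Then β(t,v₂,v₃) = t − (b−a+1)v₂ − (b−a+1)b·v₃ + v₂ρ + v₃ρ² is not totally positive. -/
import Mathlib


open IntermediateField

noncomputable section

/-- An element of a field `K` is totally positive if its image under every
real embedding of `K` is positive. -/
def TotallyPositive {K : Type*} [Field K] (x : K) : Prop :=
  ∀ φ : K →+* ℝ, 0 < φ x

/-- The element `β(t,v₂,v₃) = t − (b−a+1)v₂ − (b−a+1)b·v₃ + v₂ρ + v₃ρ²` of `ℚ(ρ) ⊆ ℝ`. -/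
def betaT (a b : ℤ) (ρ : ℝ) (t v₂ v₃ : ℤ) : ℚ⟮ρ⟯ :=
  ((t - (b - a + 1) * v₂ - (b - a + 1) * b * v₃ : ℤ) : ℚ⟮ρ⟯)
    + ((v₂ : ℤ) : ℚ⟮ρ⟯) * AdjoinSimple.gen ℚ ρ
    + ((v₃ : ℤ) : ℚ⟮ρ⟯) * AdjoinSimple.gen ℚ ρ ^ 2

/-- Let `2 ≤ a ≤ b−2` and `1 ≤ t ≤ b−a`, `v₂ < 0`, `v₃ < 0`. Then
`β(t,v₂,v₃)` is not totally positive. -/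
theorem stmt_9 (a b : ℤ) (ha : 2 ≤ a) (hab : a ≤ b - 2)
    (ρ : ℝ) (hroot : ρ ^ 3 - ((a : ℝ) + (b : ℝ)) * ρ ^ 2 + (a : ℝ) * (b : ℝ) * ρ - 1 = 0)
    (hmax : ∀ x : ℝ, x ^ 3 - ((a : ℝ) + (b : ℝ)) * x ^ 2 + (a : ℝ) * (b : ℝ) * x - 1 = 0 → x ≤ ρ)
    (hdeg : Module.finrank ℚ ℚ⟮ρ⟯ = 3)
    (t v₂ v₃ : ℤ) (ht0 : 1 ≤ t) (ht1 : t ≤ b - a)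
    (hv₂ : v₂ < 0) (hv₃ : v₃ < 0) :
    ¬ TotallyPositive (betaT a b ρ t v₂ v₃) := by
  intro htp
  -- real bounds on a, b
  have haR : (2:ℝ) ≤ (a:ℝ) := by exact_mod_cast ha
  have habR : (a:ℝ) ≤ (b:ℝ) - 2 := by exact_mod_cast hab
  -- ρ > b via IVT
  have hρb : (b:ℝ) < ρ := by
    set f : ℝ → ℝ := fun x => x ^ 3 - ((a : ℝ) + (b : ℝ)) * x ^ 2 + (a : ℝ) * (b : ℝ) * x - 1 with hf
    have hcont : ContinuousOn f (Set.Icc (b:ℝ) ((a:ℝ)+(b:ℝ)+1)) := by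
      fun_prop
    have hle : (b:ℝ) ≤ (a:ℝ)+(b:ℝ)+1 := by linarith
    have hfb : f (b:ℝ) = -1 := by simp only [hf]; ring
    have hfc : f ((a:ℝ)+(b:ℝ)+1) = ((a:ℝ)+(b:ℝ)+1)^2 + (a:ℝ)*(b:ℝ)*((a:ℝ)+(b:ℝ)+1) - 1 := by
      simp only [hf]; ring
    have hfcpos : 0 < f ((a:ℝ)+(b:ℝ)+1) := by
      rw [hfc]
      have hb4 : (4:ℝ) ≤ (b:ℝ) := by linarith
      have hab0 : (0:ℝ) < (a:ℝ)*(b:ℝ)*((a:ℝ)+(b:ℝ)+1) := by positivity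
      nlinarith
    have hmem : (0:ℝ) ∈ Set.Ioo (f (b:ℝ)) (f ((a:ℝ)+(b:ℝ)+1)) := by
      constructor
      · rw [hfb]; norm_num
      · exact hfcpos
    obtain ⟨c, hc, hfc0⟩ := intermediate_value_Ioo hle hcont hmem
    have := hmax c hfc0
    exact lt_of_lt_of_le hc.1 this
  -- the real embedding
  have h := htp (ℚ⟮ρ⟯.val.toRingHom)
  have hgen : (ℚ⟮ρ⟯.val.toRingHom) (AdjoinSimple.gen ℚ ρ) = ρ := rfl
  have hval : (ℚ⟮ρ⟯.val.toRingHom) (betaT a b ρ t v₂ v₃)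
      = ((t - (b - a + 1) * v₂ - (b - a + 1) * b * v₃ : ℤ) : ℝ)
        + (v₂ : ℝ) * ρ + (v₃ : ℝ) * ρ ^ 2 := by
    simp [betaT, hgen]
  rw [hval] at h
  push_cast at h
  have hv₂R : (v₂ : ℝ) ≤ -1 := by
    have : v₂ ≤ -1 := by omega
    exact_mod_cast this
  have hv₃R : (v₃ : ℝ) ≤ -1 := by
    have : v₃ ≤ -1 := by omega
    exact_mod_cast this
  have htR : (t : ℝ) ≤ (b:ℝ) - (a:ℝ) := by exact_mod_cast ht1
  nlinarith [mul_nonneg (by linarith : (0:ℝ) ≤ -(v₂:ℝ) - 1) (by nlinarith : (0:ℝ) ≤ ρ - ((b:ℝ) - (a:ℝ) + 1)),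
    mul_nonneg (by linarith : (0:ℝ) ≤ -(v₃:ℝ) - 1) (by nlinarith : (0:ℝ) ≤ ρ^2 - ((b:ℝ) - (a:ℝ) + 1) * (b:ℝ))]
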